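/- Let A be a noncatenary Noetherian local domain. Then dim A ≥ 3, and moreover any saturated chain of primes from (0) to the maximal ideal of A of length less than dim A has length at least 2. -/
import Mathlib


open IsLocalRing

/-- A chain of primes indexed by `Fin (n+1)` is saturated if each step is a covering
relation in `Spec`. -/
def IsSaturatedChain {R : Type} [CommRing R] {n : ℕ} (f : Fin (n + 1) → PrimeSpectrum R) : Prop :=
  ∀ i : Fin n, f i.castSucc ⋖ f i.succ

/-- A ring is catenary if any two saturated chains of primes with the same endpoints have
the same length. -/
def IsCatenary (R : Type) [CommRing R] : Prop :=
  ∀ (n m : ℕ) (f : Fin (n + 1) → PrimeSpectrum R) (g : Fin (m + 1) → PrimeSpectrum R),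
    IsSaturatedChain f → IsSaturatedChain g → f 0 = g 0 →
    f (Fin.last n) = g (Fin.last m) → n = m

lemma IsSaturatedChain.strictMono' {R : Type} [CommRing R] {n : ℕ}
    {f : Fin (n + 1) → PrimeSpectrum R} (hf : IsSaturatedChain f) : StrictMono f :=
  Fin.strictMono_iff_lt_succ.mpr fun i => (hf i).1

lemma chain_le_dim {R : Type} [CommRing R] {n : ℕ}
    {f : Fin (n + 1) → PrimeSpectrum R} (hf : IsSaturatedChain f) :
    (n : WithBot ℕ∞) ≤ ringKrullDim R := by
  have := Order.LTSeries.length_le_krullDim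
    (⟨n, f, fun i => (hf i).1⟩ : LTSeries (PrimeSpectrum R))
  exact this

lemma exists_big_chain {α : Type*} [Preorder α] {n : ℕ}
    (h : (n : WithBot ℕ∞) < Order.krullDim α) :
    ∃ p : LTSeries α, n < p.length := by
  rw [Order.krullDim, lt_iSup_iff] at h
  obtain ⟨p, hp⟩ := h
  exact ⟨p, by exact_mod_cast hp⟩

/-- Let `A` be a noncatenary Noetherian local domain.  Then `dim A ≥ 3`, and any
saturated chain of primes from `(0)` to the maximal ideal of `A` of length less than
`dim A` has length at least `2`. -/
theorem stmt15 (A : Type) [CommRing A] [IsDomain A] [IsLocalRing A] [IsNoetherianRing A]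
    (hnoncat : ¬ IsCatenary A) :
    3 ≤ ringKrullDim A ∧
    ∀ (m : ℕ) (f : Fin (m + 1) → PrimeSpectrum A),
      IsSaturatedChain f → f 0 = ⟨⊥, Ideal.bot_prime⟩ →
      (f (Fin.last m)).asIdeal = maximalIdeal A →
      (m : WithBot ℕ∞) < ringKrullDim A → 2 ≤ m := by
  constructor
  · -- If dim ≤ 2 then A is catenary; contradiction.
    by_contra h3
    apply hnoncat
    have hbound : ∀ (n : ℕ) (f : Fin (n + 1) → PrimeSpectrum A),
        IsSaturatedChain f → n ≤ 2 := by
      intro n f hf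
      have h1 := lt_of_le_of_lt (chain_le_dim hf) (lt_of_not_ge h3)
      have h3' : ((3 : ℕ) : WithBot ℕ∞) = 3 := by norm_num
      rw [← h3'] at h1
      have : n < 3 := by exact_mod_cast h1
      omega
    -- key: no shorter saturated chain with same endpoints
    have key : ∀ (n m : ℕ) (f : Fin (n + 1) → PrimeSpectrum A)
        (g : Fin (m + 1) → PrimeSpectrum A),
        IsSaturatedChain f → IsSaturatedChain g → f 0 = g 0 →
        f (Fin.last n) = g (Fin.last m) → n < m → False := by
      intro n m f g hf hg h0 hlast hnm
      have hm2 : m ≤ 2 := hbound m g hg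
      have hn1 : n ≤ 1 := by omega
      interval_cases n
      · -- n = 0 : g 0 = g (last m) yet g is strictly monotone
        have h00 : f (Fin.last 0) = f 0 := congrArg f (Fin.fin_one_eq_zero _)
        have : g 0 < g (Fin.last m) :=
          hg.strictMono' (by simpa [Fin.lt_iff_val_lt_val] using hnm)
        rw [← h0, ← hlast, h00] at this
        exact lt_irrefl _ this
      · -- n = 1, so m = 2
        have hm : m = 2 := le_antisymm hm2 hnm
        subst hm
        have hcov : f 0 ⋖ f (Fin.last 1) := hf 0
        have h1 : f 0 < g 1 := by
          rw [h0]
          exact (hg 0).1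
        have h2 : g 1 < f (Fin.last 1) := by
          rw [hlast]
          exact (hg 1).1
        exact hcov.2 h1 h2
    intro n m f g hf hg h0 hlast
    rcases lt_trichotomy n m with h | h | h
    · exact absurd (key n m f g hf hg h0 hlast h) not_false
    · exact h
    · exact absurd (key m n g f hg hf h0.symm hlast.symm h) not_false
  · intro m f hf h0 hlast hlt
    by_contra hm
    push_neg at hm
    interval_cases m
    · -- m = 0 : the maximal ideal is ⊥, so Spec A has one point, yet dim > 0
      have hbot : maximalIdeal A = ⊥ := by
        rw [← hlast]
        have : f (Fin.last 0) = f 0 := congrArg f (Fin.fin_one_eq_zero _)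
        rw [this, h0]
      obtain ⟨p, hp⟩ := exists_big_chain (n := 0) hlt
      have hlt2 : p.toFun ⟨0, by omega⟩ < p.toFun ⟨1, by omega⟩ :=
        p.strictMono (by simp [Fin.lt_iff_val_lt_val])
      have heq : ∀ q : PrimeSpectrum A, q.asIdeal = ⊥ := fun q => by
        have := le_maximalIdeal q.isPrime.ne_top
        rw [hbot] at this
        exact le_bot_iff.mp this
      have : p.toFun ⟨0, by omega⟩ = p.toFun ⟨1, by omega⟩ :=
        PrimeSpectrum.ext ((heq _).trans (heq _).symm)
      exact absurd this (ne_of_lt hlt2)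
    · -- m = 1 : ⊥ ⋖ maximalIdeal, yet dim > 1 gives a prime strictly between
      obtain ⟨p, hp⟩ := exists_big_chain (n := 1) hlt
      have h01 : (⟨0, by omega⟩ : Fin (p.length + 1)) < ⟨1, by omega⟩ := by
        simp [Fin.lt_iff_val_lt_val]
      have h12 : (⟨1, by omega⟩ : Fin (p.length + 1)) < ⟨2, by omega⟩ := by
        simp [Fin.lt_iff_val_lt_val]
      set q0 := p.toFun ⟨0, by omega⟩
      set q1 := p.toFun ⟨1, by omega⟩
      set q2 := p.toFun ⟨2, by omega⟩
      have hq01 : q0 < q1 := p.strictMono h01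
      have hq12 : q1 < q2 := p.strictMono h12
      have hcov : f 0 ⋖ f (Fin.last 1) := hf 0
      have hbotle : ∀ q : PrimeSpectrum A, f 0 ≤ q := fun q => by
        rw [h0]
        exact (PrimeSpectrum.asIdeal_le_asIdeal _ _).mp bot_le
      have hq2le : q2 ≤ f (Fin.last 1) := by
        rw [← PrimeSpectrum.asIdeal_le_asIdeal, hlast]
        exact le_maximalIdeal q2.isPrime.ne_top
      rcases lt_or_eq_of_le hq2le with h | h
      · exact hcov.2 (lt_of_le_of_lt (hbotle q0) (hq01.trans hq12)) h
      · exact hcov.2 (lt_of_le_of_lt (hbotle q0) hq01) (h ▸ hq12)
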